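/- Let w: [0,∞) → ℝ solve w'' + ((n+1)/r)w' − κrw' + 3rww' + (n+2)w² − κw = 0 with w(0) = α, w'(0) = 0, and suppose w is defined on all of (0,∞) with α > 0. Then w(r) > 0 for all r ∈ (0,∞). -/

import Mathlib

open Filter Topology Set

private lemma gron_alg (n κ M A C W W' ax : ℝ) (hκ : 0 < κ) (hnn : 0 < n)
    (hC : C = 1 + κ + (n+2)*M + 2*A) (hW : |W| ≤ M) (hax : |ax| ≤ A) :
    0 ≤ C*(W^2+W'^2) + (2*W*W' + 2*W'*(κ*W - (n+2)*W^2 - ax*W')) := by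
  obtain ⟨hW1, hW2⟩ := abs_le.mp hW
  obtain ⟨hax1, hax2⟩ := abs_le.mp hax
  have e1 : -(W^2+W'^2) ≤ 2*W*W' := by nlinarith [sq_nonneg (W+W')]
  have e2 : -κ*(W^2+W'^2) ≤ 2*κ*(W*W') := by nlinarith [sq_nonneg (W+W'), hκ.le]
  have e3 : 2*(W^2*W') ≤ M*(W^2+W'^2) := by
    nlinarith [mul_nonneg (sub_nonneg.mpr hW2) (sq_nonneg (W+W')),
      mul_nonneg (by nlinarith [abs_nonneg W] : (0:ℝ) ≤ M + W) (sq_nonneg (W-W'))]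
  have e4 : ax*W'^2 ≤ A*W'^2 := mul_le_mul_of_nonneg_right hax2 (sq_nonneg W')
  have e5 : A*W'^2 ≤ A*(W^2+W'^2) := by
    have hAnn : 0 ≤ A := le_trans (abs_nonneg ax) hax
    nlinarith [sq_nonneg W]
  have e3' : 2*(n+2)*(W^2*W') ≤ (n+2)*(M*(W^2+W'^2)) := by nlinarith [e3]
  nlinarith [e1, e2, e3', e4, e5]

private lemma gronwall_contra (n κ : ℝ) (w : ℝ → ℝ) (hn : 4 < n) (hκ : 0 < κ)
    (hdw : Differentiable ℝ w) (hdw' : Differentiable ℝ (deriv w))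
    (hODE : ∀ r : ℝ, 0 < r → deriv (deriv w) r =
      κ * w r - (n+2)*(w r)^2 - ((n+1)/r - κ*r + 3*r*w r) * deriv w r)
    (r0 : ℝ) (hr0 : 0 < r0) (hz : w r0 = 0) (hz' : deriv w r0 = 0)
    (hpos : ∀ r, 0 ≤ r → r < r0 → 0 < w r) : False := by
  have hcw : Continuous w := hdw.continuous
  have hcw' : Continuous (deriv w) := hdw'.continuous
  set a := r0/2 with ha
  have hapos : 0 < a := by positivity
  have har0 : a < r0 := by simp only [ha]; linarith
  obtain ⟨C0, hC0⟩ := isCompact_Icc.exists_bound_of_continuousOn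
    (s := Icc a r0) hcw.continuousOn
  set M := max C0 0 with hM
  have hMnn : 0 ≤ M := le_max_right _ _
  have hMb : ∀ x ∈ Icc a r0, |w x| ≤ M := fun x hx =>
    le_trans (hC0 x hx) (le_max_left _ _)
  set A := (n+1)/a + κ*r0 + 3*r0*M with hA
  have hAnn : 0 ≤ A := by
    have h0 : 0 < (n+1)/a := by positivity
    have h1 : 0 ≤ κ*r0 := by positivity
    have h2 : 0 ≤ 3*r0*M := by positivity
    simp only [hA]; linarith
  have hAb : ∀ x ∈ Icc a r0, |(n+1)/x - κ*x + 3*x*w x| ≤ A := by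
    intro x hx
    have hxa : a ≤ x := hx.1
    have hxr0 : x ≤ r0 := hx.2
    have hxpos : 0 < x := lt_of_lt_of_le hapos hxa
    have h1 : |(n+1)/x| ≤ (n+1)/a := by
      rw [abs_of_nonneg (by positivity)]
      exact div_le_div_of_nonneg_left (by linarith) hapos hxa
    have h2 : |κ*x| ≤ κ*r0 := by
      rw [abs_of_nonneg (by positivity)]
      nlinarith
    have h3 : |3*x*w x| ≤ 3*r0*M := by
      rw [abs_mul]
      have := hMb x hx
      have h4 : |3*x| = 3*x := abs_of_nonneg (by positivity)
      rw [h4]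
      nlinarith [abs_nonneg (w x)]
    calc |(n+1)/x - κ*x + 3*x*w x| ≤ |(n+1)/x - κ*x| + |3*x*w x| := abs_add_le _ _
      _ ≤ |(n+1)/x| + |κ*x| + |3*x*w x| := by linarith [abs_sub ((n+1)/x) (κ*x)]
      _ ≤ A := by simp only [hA]; linarith
  set C := 1 + κ + (n+2)*M + 2*A with hC
  have hzd : ∀ r, HasDerivAt (fun s => (w s)^2 + (deriv w s)^2)
      (2 * w r * deriv w r + 2 * deriv w r * deriv (deriv w) r) r := by
    intro r
    have h1 := ((hdw r).hasDerivAt.pow 2)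
    have h2 := ((hdw' r).hasDerivAt.pow 2)
    have := h1.add h2
    exact this.congr_deriv (by ring)
  set H : ℝ → ℝ := fun r => Real.exp (C*r) * ((w r)^2 + (deriv w r)^2) with hHdef
  have hHd : ∀ r, HasDerivAt H (Real.exp (C*r) * C * ((w r)^2 + (deriv w r)^2)
      + Real.exp (C*r) * (2 * w r * deriv w r + 2 * deriv w r * deriv (deriv w) r)) r := by
    intro r
    have he : HasDerivAt (fun s => Real.exp (C*s)) (Real.exp (C*r) * C) r := by
      simpa using ((hasDerivAt_id r).const_mul C).exp
    exact he.mul (hzd r)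
  have hHmono : MonotoneOn H (Icc a r0) := by
    apply monotoneOn_of_deriv_nonneg (convex_Icc _ _)
    · exact ((Real.continuous_exp.comp (continuous_const.mul continuous_id)).mul
        ((hcw.pow 2).add (hcw'.pow 2))).continuousOn
    · intro x hx
      exact (hHd x).differentiableAt.differentiableWithinAt
    · intro x hx
      rw [interior_Icc] at hx
      rw [(hHd x).deriv]
      have hxpos : 0 < x := lt_trans hapos hx.1
      have hxI : x ∈ Icc a r0 := ⟨le_of_lt hx.1, le_of_lt hx.2⟩
      have hexp : (0:ℝ) < Real.exp (C*x) := Real.exp_pos _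
      have key := gron_alg n κ M A C (w x) (deriv w x) ((n+1)/x - κ*x + 3*x*w x)
        hκ (by linarith) hC (hMb x hxI) (hAb x hxI)
      rw [hODE x hxpos]
      calc (0:ℝ) ≤ Real.exp (C*x) * (C*((w x)^2+(deriv w x)^2)
            + (2*(w x)*(deriv w x) + 2*(deriv w x)*(κ*(w x) - (n+2)*(w x)^2
              - ((n+1)/x - κ*x + 3*x*w x)*(deriv w x)))) := mul_nonneg hexp.le key
        _ = Real.exp (C*x) * C * ((w x)^2 + (deriv w x)^2)
            + Real.exp (C*x) * (2 * w x * deriv w x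
              + 2 * deriv w x * (κ * w x - (n+2)*(w x)^2
                - ((n+1)/x - κ*x + 3*x*w x) * deriv w x)) := by ring
  have hb : (3*r0/4) ∈ Icc a r0 := ⟨by simp only [ha]; linarith, by linarith⟩
  have hr0I : r0 ∈ Icc a r0 := ⟨le_of_lt har0, le_refl r0⟩
  have hmono := hHmono hb hr0I (by linarith)
  have hHr0 : H r0 = 0 := by
    simp only [hHdef, hz, hz']
    ring
  have hwb : 0 < w (3*r0/4) := hpos _ (by linarith) (by linarith)
  have hHb : 0 < H (3*r0/4) := by
    simp only [hHdef]
    have h1 : 0 < (w (3*r0/4))^2 + (deriv w (3*r0/4))^2 := by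
      nlinarith [sq_nonneg (deriv w (3*r0/4))]
    positivity
  rw [hHr0] at hmono
  linarith


set_option maxHeartbeats 2000000 in
private lemma blowup_contra (n κ : ℝ) (w : ℝ → ℝ) (hn : 4 < n) (hκ : 0 < κ)
    (hdw : Differentiable ℝ w) (hdw' : Differentiable ℝ (deriv w))
    (hODE : ∀ r : ℝ, 0 < r → deriv (deriv w) r =
      κ * w r - (n+2)*(w r)^2 - ((n+1)/r - κ*r + 3*r*w r) * deriv w r)
    (r1 : ℝ) (hr1 : 0 < r1) (hwneg : w r1 < 0) (hw'neg : deriv w r1 < 0) : False := by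
  have hcw : Continuous w := hdw.continuous
  have hcw' : Continuous (deriv w) := hdw'.continuous
  -- Step 1: the derivative stays negative
  have hstay : ∀ r, r1 ≤ r → deriv w r < 0 := by
    by_contra hcontra
    push_neg at hcontra
    obtain ⟨rb, hrb1, hrb2⟩ := hcontra
    set T : Set ℝ := Ici r1 ∩ (deriv w) ⁻¹' (Ici 0) with hTdef
    have hTne : T.Nonempty := ⟨rb, hrb1, hrb2⟩
    have hTcl : IsClosed T := isClosed_Ici.inter (isClosed_Ici.preimage hcw')
    have hTbdd : BddBelow T := ⟨r1, fun x hx => hx.1⟩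
    set r2 := sInf T with hr2def
    have hr2T : r2 ∈ T := hTcl.csInf_mem hTne hTbdd
    have h12 : r1 < r2 := lt_of_le_of_ne hr2T.1
      (fun h => absurd (h ▸ hr2T.2) (not_le.mpr hw'neg))
    have hlt : ∀ r, r1 ≤ r → r < r2 → deriv w r < 0 := by
      intro r h1 h2
      by_contra h; push_neg at h
      exact absurd (csInf_le hTbdd ⟨h1, h⟩) (not_le.mpr h2)
    have hd0 : deriv w r2 = 0 := by
      refine le_antisymm ?_ hr2T.2
      have ht2 : Tendsto (deriv w) (𝓝[<] r2) (𝓝 (deriv w r2)) :=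
        hcw'.continuousAt.mono_left nhdsWithin_le_nhds
      refine le_of_tendsto ht2 ?_
      filter_upwards [Ioo_mem_nhdsLT_of_mem ⟨h12, le_refl r2⟩] with x hx
      exact (hlt x hx.1.le hx.2).le
    have hwr2 : w r2 < 0 := by
      have hanti : AntitoneOn w (Icc r1 r2) :=
        antitoneOn_of_deriv_nonpos (convex_Icc _ _) hcw.continuousOn
          (fun x _ => (hdw x).differentiableWithinAt)
          (fun x hx => by rw [interior_Icc] at hx; exact (hlt x hx.1.le hx.2).le)
      have := hanti ⟨le_refl r1, h12.le⟩ ⟨h12.le, le_refl r2⟩ h12.le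
      linarith
    have hsnn : 0 ≤ deriv (deriv w) r2 := by
      have ht : Tendsto (slope (deriv w) r2) (𝓝[<] r2) (𝓝 (deriv (deriv w) r2)) :=
        (hasDerivAt_iff_tendsto_slope.mp (hdw' r2).hasDerivAt).mono_left
          (nhdsWithin_mono _ (fun y hy => ne_of_lt hy))
      refine ge_of_tendsto ht ?_
      filter_upwards [Ioo_mem_nhdsLT_of_mem ⟨h12, le_refl r2⟩] with x hx
      rw [slope_def_field, hd0, sub_zero]
      have h1 : deriv w x < 0 := hlt x hx.1.le hx.2
      have h2 : x - r2 < 0 := by linarith [hx.2]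
      exact le_of_lt (div_pos_of_neg_of_neg h1 h2)
    have h2pos : 0 < r2 := lt_trans hr1 h12
    have hode := hODE r2 h2pos
    rw [hd0] at hode
    nlinarith [hwr2, mul_pos hκ (neg_pos.mpr hwr2),
      mul_nonneg (by linarith : (0:ℝ) ≤ n+2) (sq_nonneg (w r2)), hsnn, hode]
  -- Step 2: w is nonincreasing after r1
  have hanti : AntitoneOn w (Ici r1) :=
    antitoneOn_of_deriv_nonpos (convex_Ici _) hcw.continuousOn
      (fun x _ => (hdw x).differentiableWithinAt)
      (fun x hx => by rw [interior_Ici] at hx; exact (hstay x (le_of_lt hx)).le)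
  have hwle : ∀ r, r1 ≤ r → w r ≤ w r1 :=
    fun r hr => hanti (mem_Ici.mpr (le_refl r1)) (mem_Ici.mpr hr) hr
  -- Step 3: beyond R1 the friction helps
  set R1 := max r1 (Real.sqrt ((n+1)/κ)) + 1 with hR1
  have hR1a : r1 ≤ max r1 (Real.sqrt ((n+1)/κ)) := le_max_left _ _
  have hR1b : Real.sqrt ((n+1)/κ) ≤ max r1 (Real.sqrt ((n+1)/κ)) := le_max_right _ _
  clear_value R1
  have hR1r1 : r1 < R1 := by rw [hR1]; linarith
  have hR1pos : 0 < R1 := lt_trans hr1 hR1r1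
  have hkey : ∀ r, R1 ≤ r → (n+1)/r ≤ κ * r := by
    intro r hr
    have hrpos : 0 < r := lt_of_lt_of_le hR1pos hr
    have hsq : Real.sqrt ((n+1)/κ) ≤ r := by
      have h1 : Real.sqrt ((n+1)/κ) ≤ R1 := by rw [hR1]; linarith
      exact le_trans h1 hr
    have hx : (0:ℝ) ≤ (n+1)/κ := by positivity
    have h1 : (n+1)/κ ≤ r^2 := by
      nlinarith [Real.sq_sqrt hx, Real.sqrt_nonneg ((n+1)/κ)]
    rw [div_le_iff₀ hrpos]
    rw [div_le_iff₀ hκ] at h1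
    nlinarith
  have hw'R1 : deriv w R1 < 0 := hstay R1 hR1r1.le
  have hwR1 : w R1 ≤ w r1 := hwle R1 hR1r1.le
  -- Step 4: the energy is monotone on [R1, ∞)
  set E : ℝ → ℝ := fun r => (deriv w r)^2 + (2*(n+2)/3)*(w r)^3 with hEdef
  have hEr : ∀ r, E r = (deriv w r)^2 + (2*(n+2)/3)*(w r)^3 := fun r => rfl
  clear_value E
  have hEd : ∀ r, HasDerivAt E (2*(deriv w r)*(deriv (deriv w) r)
      + (2*(n+2)/3)*(3*(w r)^2*(deriv w r))) r := by
    intro r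
    rw [hEdef]
    have h1 := (hdw' r).hasDerivAt.pow 2
    have h2 := ((hdw r).hasDerivAt.pow 3).const_mul (2*(n+2)/3)
    exact (h1.add h2).congr_deriv (by ring)
  have hEmono : MonotoneOn E (Ici R1) := by
    apply monotoneOn_of_deriv_nonneg (convex_Ici _)
    · rw [hEdef]
      exact ((hcw'.pow 2).add (continuous_const.mul (hcw.pow 3))).continuousOn
    · exact fun x _ => (hEd x).differentiableAt.differentiableWithinAt
    · intro x hx
      rw [interior_Ici] at hx
      rw [(hEd x).deriv]
      have hxpos : 0 < x := lt_trans hR1pos hx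
      have hWx : w x ≤ w r1 := hwle x (le_trans hR1r1.le hx.le)
      have hW'x : deriv w x < 0 := hstay x (le_trans hR1r1.le hx.le)
      have hax : (n+1)/x ≤ κ * x := hkey x hx.le
      rw [hODE x hxpos]
      have t1 : 0 ≤ (κ*x - (n+1)/x) * (deriv w x)^2 :=
        mul_nonneg (by linarith) (sq_nonneg _)
      have t2 : 0 ≤ (-(3*x*w x)) * (deriv w x)^2 :=
        mul_nonneg (by nlinarith) (sq_nonneg _)
      have t3 : 0 ≤ κ * ((-(w x)) * (-(deriv w x))) :=
        mul_nonneg hκ.le (mul_nonneg (by linarith) (by linarith))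
      nlinarith [t1, t2, t3]
  -- Step 5: quadratic decay of w
  set c : ℝ := (n+2)*(w r1)^2 with hc
  have hw1ne : w r1 ≠ 0 := ne_of_lt hwneg
  have hcpos : 0 < c := by
    have h9 : (0:ℝ) < (w r1)^2 := by positivity
    simp only [hc]; nlinarith
  clear_value c
  have hphi : AntitoneOn (fun r => deriv w r + c*r) (Ici R1) := by
    apply antitoneOn_of_deriv_nonpos (convex_Ici _)
    · exact (hcw'.add (continuous_const.mul continuous_id)).continuousOn
    · intro x _
      exact (((hdw' x).hasDerivAt.add (((hasDerivAt_id x).const_mul c))).differentiableAt).differentiableWithinAt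
    · intro x hx
      rw [interior_Ici] at hx
      have hder : HasDerivAt (fun r => deriv w r + c*r) (deriv (deriv w) x + c) x := by
        have := (hdw' x).hasDerivAt.add ((hasDerivAt_id x).const_mul c)
        exact this.congr_deriv (by ring)
      rw [hder.deriv]
      have hxpos : 0 < x := lt_trans hR1pos hx
      have hWx : w x ≤ w r1 := hwle x (le_trans hR1r1.le hx.le)
      have hW'x : deriv w x < 0 := hstay x (le_trans hR1r1.le hx.le)
      have hax : (n+1)/x ≤ κ * x := hkey x hx.le
      rw [hODE x hxpos]
      have t1 : 0 ≤ (κ*x - (n+1)/x) * (-(deriv w x)) :=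
        mul_nonneg (by linarith) (by linarith)
      have t2 : 0 ≤ (-(3*x*w x)) * (-(deriv w x)) :=
        mul_nonneg (by nlinarith) (by linarith)
      have t3 : 0 ≤ κ * (-(w x)) := mul_nonneg hκ.le (by linarith)
      have t4 : 0 ≤ (w r1 - w x) * (-(w r1 + w x)) :=
        mul_nonneg (by linarith) (by linarith)
      simp only [hc]
      nlinarith [t1, t2, t3, t4]
  have hphi' : ∀ r, R1 ≤ r → deriv w r ≤ -(c*(r - R1)) := by
    intro r hr
    have h1 := hphi (mem_Ici.mpr (le_refl R1)) (mem_Ici.mpr hr) hr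
    have h2 : deriv w r + c*r ≤ deriv w R1 + c*R1 := h1
    linarith [hw'R1]
  have hderpsi : ∀ x : ℝ, HasDerivAt (fun r => w r + (c/2)*(r - R1)^2)
      (deriv w x + c*(x - R1)) x := by
    intro x
    have h1 : HasDerivAt (fun r : ℝ => (r - R1)^2) (2*(x - R1)) x := by
      have := ((hasDerivAt_id x).sub_const R1).pow 2
      exact this.congr_deriv (by simp)
    have h2 := h1.const_mul (c/2)
    have h3 := (hdw x).hasDerivAt.add h2
    exact h3.congr_deriv (by ring)
  have hpsi : AntitoneOn (fun r => w r + (c/2)*(r - R1)^2) (Ici R1) := by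
    apply antitoneOn_of_deriv_nonpos (convex_Ici _)
    · exact (hcw.add (continuous_const.mul ((continuous_id.sub continuous_const).pow 2))).continuousOn
    · exact fun x _ => (hderpsi x).differentiableAt.differentiableWithinAt
    · intro x hx
      rw [interior_Ici] at hx
      rw [(hderpsi x).deriv]
      linarith [hphi' x hx.le]
  have hwquad : ∀ r, R1 ≤ r → w r ≤ w R1 - (c/2)*(r - R1)^2 := by
    intro r hr
    have h1 := hpsi (mem_Ici.mpr (le_refl R1)) (mem_Ici.mpr hr) hr
    have h2 : w r + (c/2)*(r - R1)^2 ≤ w R1 + (c/2)*(R1 - R1)^2 := h1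
    have h3 : (R1 - R1 : ℝ)^2 = 0 := by ring
    rw [h3, mul_zero, add_zero] at h2
    linarith only [h2]
  -- Step 6: the threshold
  set c1 : ℝ := (n+2)/3 with hc1
  have hc1pos : 0 < c1 := by simp only [hc1]; linarith
  set E0 : ℝ := E R1 with hE0
  clear_value E0
  set T : ℝ := max 1 (3*|E0|/c1) with hT
  have hT1 : (1:ℝ) ≤ T := le_max_left _ _
  have hTc : 3*|E0|/c1 ≤ T := le_max_right _ _
  clear_value T
  have hTpos : 0 < T := lt_of_lt_of_le one_pos hT1
  set R2 : ℝ := R1 + Real.sqrt (2*T/c) + 1 with hR2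
  have hsqnn : (0:ℝ) ≤ Real.sqrt (2*T/c) := Real.sqrt_nonneg _
  clear_value R2
  have hR2R1 : R1 < R2 := by rw [hR2]; linarith
  have hwT : ∀ r, R2 ≤ r → w r ≤ -T := by
    intro r hr
    have hrR1 : R1 ≤ r := le_trans hR2R1.le hr
    have h1 := hwquad r hrR1
    have hsq : Real.sqrt (2*T/c) ≤ r - R1 := by
      rw [hR2] at hr; linarith
    have h2Tc : (0:ℝ) ≤ 2*T/c := by positivity
    have h2 : 2*T/c ≤ (r - R1)^2 := by
      nlinarith [Real.sq_sqrt h2Tc, Real.sqrt_nonneg (2*T/c)]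
    have h3 : T ≤ (c/2)*(r - R1)^2 := by
      rw [div_le_iff₀ hcpos] at h2
      linarith
    have h4 : w R1 < 0 := by linarith [hwR1, hwneg]
    linarith
  -- Step 7: the derivative dominates
  have hgrow : ∀ r, R2 ≤ r → c1 * (-(w r))^3 ≤ (deriv w r)^2 := by
    intro r hr
    have hrR1 : R1 ≤ r := le_trans hR2R1.le hr
    have hE0le : E0 ≤ (deriv w r)^2 + (2*(n+2)/3)*(w r)^3 := by
      rw [hE0, ← hEr r]
      exact hEmono (mem_Ici.mpr (le_refl R1)) (mem_Ici.mpr hrR1) hrR1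
    have hwr : w r ≤ -T := hwT r hr
    have hwp : T ≤ -(w r) := by linarith
    have hcube : T^3 ≤ (-(w r))^3 := pow_le_pow_left₀ hTpos.le hwp 3
    have hT3 : T ≤ T^3 := by
      nlinarith [mul_nonneg (mul_nonneg (by linarith : (0:ℝ) ≤ T)
        (by linarith : (0:ℝ) ≤ T - 1)) (by linarith : (0:ℝ) ≤ T + 1)]
    have h5 : 3*|E0| ≤ c1 * T := by
      rw [div_le_iff₀ hc1pos] at hTc; linarith
    have h6 : 3*|E0| ≤ c1 * (-(w r))^3 := by
      calc 3*|E0| ≤ c1 * T := h5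
        _ ≤ c1 * T^3 := by nlinarith
        _ ≤ c1 * (-(w r))^3 := by nlinarith
    have h7 : -E0 ≤ |E0| := neg_le_abs _
    have h8 : (2*(n+2)/3)*(w r)^3 = -(2*c1*(-(w r))^3) := by rw [hc1]; ring
    have h9 : (0:ℝ) ≤ |E0| := abs_nonneg _
    linarith only [hE0le, h6, h7, h8, h9]
  -- Step 8: final contradiction via 1/sqrt(-w)
  set k : ℝ := Real.sqrt c1 with hk
  have hkpos : 0 < k := by rw [hk]; exact Real.sqrt_pos.mpr hc1pos
  have hk2 : k^2 = c1 := by rw [hk]; exact Real.sq_sqrt hc1pos.le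
  clear_value k
  have hwposR2 : ∀ r, R2 ≤ r → 0 < -(w r) := fun r hr => by linarith [hwT r hr, hTpos]
  have hqpos : ∀ r, R2 ≤ r → 0 < Real.sqrt (-(w r)) :=
    fun r hr => Real.sqrt_pos.mpr (hwposR2 r hr)
  have hslope : ∀ r, R2 ≤ r → k * ((-(w r)) * Real.sqrt (-(w r))) ≤ -(deriv w r) := by
    intro r hr
    have h1 := hgrow r hr
    have hq := Real.sq_sqrt (hwposR2 r hr).le
    have ha : 0 ≤ k * ((-(w r)) * Real.sqrt (-(w r))) :=
      mul_nonneg hkpos.le (mul_nonneg (hwposR2 r hr).le (Real.sqrt_nonneg _))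
    have hb : 0 ≤ -(deriv w r) := by
      have := hstay r (le_trans (le_trans hR1r1.le hR2R1.le) hr)
      linarith
    have hsq : (k * ((-(w r)) * Real.sqrt (-(w r))))^2 ≤ (-(deriv w r))^2 := by
      have he : (k * ((-(w r)) * Real.sqrt (-(w r))))^2
          = k^2 * ((-(w r))^2 * (Real.sqrt (-(w r)))^2) := by ring
      rw [he, hq, hk2]
      have he2 : c1 * ((-(w r))^2 * -(w r)) = c1 * (-(w r))^3 := by ring
      rw [he2]
      have he3 : (-(deriv w r))^2 = (deriv w r)^2 := by ring
      rw [he3]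
      exact h1
    nlinarith [hsq, ha, hb]
  set g : ℝ → ℝ := fun r => (Real.sqrt (-(w r)))⁻¹ with hg
  have hgd : ∀ x, R2 ≤ x → HasDerivAt g
      (-(-(deriv w x) / (2 * Real.sqrt (-(w x)))) / (Real.sqrt (-(w x)))^2) x := by
    intro x hx
    have h1 : HasDerivAt (fun r => -(w r)) (-(deriv w x)) x := (hdw x).hasDerivAt.neg
    have h2 := h1.sqrt (by exact ne_of_gt (hwposR2 x hx))
    exact h2.inv (ne_of_gt (hqpos x hx))
  have hfinal : AntitoneOn (fun r => g r + (k/2)*r) (Ici R2) := by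
    apply antitoneOn_of_deriv_nonpos (convex_Ici _)
    · apply ContinuousOn.add
      · rw [hg]
        exact ContinuousOn.inv₀ (Real.continuous_sqrt.comp hcw.neg).continuousOn
          (fun x hx => ne_of_gt (hqpos x hx))
      · exact (continuous_const.mul continuous_id).continuousOn
    · intro x hx
      rw [interior_Ici] at hx
      exact ((hgd x hx.le).add ((hasDerivAt_id x).const_mul (k/2))).differentiableAt.differentiableWithinAt
    · intro x hx
      rw [interior_Ici] at hx
      have hd : HasDerivAt (fun r => g r + k/2*r)
          (-(-(deriv w x) / (2 * Real.sqrt (-(w x)))) / (Real.sqrt (-(w x)))^2 + k/2 * 1) x :=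
        (hgd x hx.le).add ((hasDerivAt_id x).const_mul (k/2))
      rw [hd.deriv]
      set q := Real.sqrt (-(w x)) with hqdef
      have hqp : 0 < q := hqpos x hx.le
      have hqs : q^2 = -(w x) := Real.sq_sqrt (hwposR2 x hx.le).le
      have hqne : q ≠ 0 := ne_of_gt hqp
      have key : (-(-(deriv w x) / (2 * q)) / q^2 + k/2 * 1) * (2*(q^2*q))
          = deriv w x + k*(q^2*q) := by field_simp
      by_contra hcon2
      push_neg at hcon2
      have hq3 : 0 < 2*(q^2*q) := by positivity
      have hgt := mul_pos hcon2 hq3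
      rw [key, hqs] at hgt
      linarith [hslope x hx.le]
  have hgR2pos : 0 < g R2 := by rw [hg]; exact inv_pos.mpr (hqpos R2 (le_refl R2))
  set X := R2 + (2/k)*(g R2) + 1 with hX
  have hXge : R2 ≤ X := by
    rw [hX]
    have h1 : 0 ≤ (2/k)*(g R2) := mul_nonneg (by positivity) hgR2pos.le
    linarith
  have hmono := hfinal (mem_Ici.mpr (le_refl R2)) (mem_Ici.mpr hXge) hXge
  have hmono2 : g X + (k/2)*X ≤ g R2 + (k/2)*R2 := hmono
  have hcalc : (k/2)*X = (k/2)*R2 + g R2 + k/2 := by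
    rw [hX]; field_simp
  have hgXpos : 0 < g X := by rw [hg]; exact inv_pos.mpr (hqpos X hXge)
  linarith


theorem global_self_similar_profile_positive
    (n κ α : ℝ) (hn : 4 < n) (hκ : 0 < κ) (hα : 0 < α)
    (w : ℝ → ℝ) (hw : ContDiff ℝ (⊤ : ℕ∞) w)
    (hsol : ∀ r : ℝ, 0 < r →
      deriv (deriv w) r + (n + 1) / r * deriv w r - κ * r * deriv w r
        + 3 * r * w r * deriv w r + (n + 2) * (w r)^2 - κ * w r = 0)
    (h0 : w 0 = α) (h0' : deriv w 0 = 0) :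
    ∀ r : ℝ, 0 < r → 0 < w r := by
  by_contra hcon
  push_neg at hcon
  obtain ⟨ra, hra, hwra⟩ := hcon
  have hdw : Differentiable ℝ w := hw.differentiable (by simp)
  have hcw : Continuous w := hdw.continuous
  have hdw' : Differentiable ℝ (deriv w) := by
    have h2 : ContDiff ℝ ((⊤:ℕ∞):WithTop ℕ∞) w := hw.of_le (mod_cast le_top)
    exact (contDiff_infty_iff_deriv.mp h2).2.differentiable (by simp)
  have hcw' : Continuous (deriv w) := hdw'.continuous
  have hODE : ∀ r : ℝ, 0 < r → deriv (deriv w) r =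
      κ * w r - (n+2)*(w r)^2 - ((n+1)/r - κ*r + 3*r*w r) * deriv w r := by
    intro r hr
    have h := hsol r hr
    ring_nf at h ⊢
    linarith
  -- the zero set
  set S : Set ℝ := Ici 0 ∩ w ⁻¹' {0} with hSdef
  have hSne : S.Nonempty := by
    rcases eq_or_lt_of_le hwra with h | h
    · exact ⟨ra, le_of_lt hra, show w ra ∈ ({0}:Set ℝ) from h.symm ▸ rfl⟩
    · have hIVT := intermediate_value_Icc' (le_of_lt hra) hcw.continuousOn
      have h0mem : (0:ℝ) ∈ Icc (w ra) (w 0) := by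
        constructor
        · exact le_of_lt h
        · rw [h0]; exact le_of_lt hα
      obtain ⟨c, hc, hwc⟩ := hIVT h0mem
      exact ⟨c, hc.1, show w c ∈ ({0}:Set ℝ) from hwc ▸ rfl⟩
  have hSclosed : IsClosed S := isClosed_Ici.inter (isClosed_singleton.preimage hcw)
  have hSbdd : BddBelow S := ⟨0, fun x hx => hx.1⟩
  set r0 := sInf S with hr0def
  have hr0S : r0 ∈ S := hSclosed.csInf_mem hSne hSbdd
  have hwr0 : w r0 = 0 := hr0S.2
  have hr0pos : 0 < r0 := by
    rcases eq_or_lt_of_le (mem_Ici.mp hr0S.1) with h | h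
    · exfalso; rw [← h] at hwr0; rw [h0] at hwr0; linarith
    · exact h
  have hpos : ∀ r, 0 ≤ r → r < r0 → 0 < w r := by
    intro r hrge hrlt
    by_contra hcontra
    push_neg at hcontra
    rcases eq_or_lt_of_le hcontra with h | h
    · exact absurd (csInf_le hSbdd ⟨hrge, show w r ∈ ({0}:Set ℝ) from h.symm ▸ rfl⟩) (not_le.mpr hrlt)
    · have hrpos : 0 < r := by
        rcases eq_or_lt_of_le hrge with h' | h'
        · exfalso; rw [← h', h0] at h; linarith
        · exact h'
      have hIVT := intermediate_value_Icc' (le_of_lt hrpos) hcw.continuousOn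
      have h0mem : (0:ℝ) ∈ Icc (w r) (w 0) := ⟨le_of_lt h, by rw [h0]; exact le_of_lt hα⟩
      obtain ⟨c, hc, hwc⟩ := hIVT h0mem
      have : r0 ≤ c := csInf_le hSbdd ⟨hc.1, show w c ∈ ({0}:Set ℝ) from hwc ▸ rfl⟩
      linarith [hc.2]
  -- derivative at r0 is ≤ 0
  have hw'le : deriv w r0 ≤ 0 := by
    have ht : Tendsto (slope w r0) (𝓝[<] r0) (𝓝 (deriv w r0)) :=
      (hasDerivAt_iff_tendsto_slope.mp (hdw r0).hasDerivAt).mono_left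
        (nhdsWithin_mono _ (fun y hy => ne_of_lt hy))
    refine le_of_tendsto ht ?_
    filter_upwards [Ioo_mem_nhdsLT_of_mem ⟨hr0pos, le_refl r0⟩] with x hx
    rw [slope_def_field]
    have h1 : 0 < w x := hpos x (le_of_lt hx.1) hx.2
    have h2 : x - r0 < 0 := by linarith [hx.2]
    rw [hwr0]
    have : w x - 0 > 0 := by linarith
    exact le_of_lt (div_neg_of_pos_of_neg this h2)
  rcases eq_or_lt_of_le hw'le with h | h
  · exact gronwall_contra n κ w hn hκ hdw hdw' hODE r0 hr0pos hwr0 h hpos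
  · -- find r1 > r0 with w r1 < 0 and deriv w r1 < 0
    have hopen : IsOpen {x : ℝ | deriv w x < 0} := isOpen_lt hcw' continuous_const
    obtain ⟨ε, hε, hball⟩ := Metric.isOpen_iff.mp hopen r0 h
    set r1 := r0 + ε/2 with hr1def
    have hsub : Icc r0 r1 ⊆ {x : ℝ | deriv w x < 0} := by
      intro x hx
      apply hball
      rw [Metric.mem_ball, Real.dist_eq, abs_lt]
      have hx1 : r0 ≤ x := hx.1
      have hx2 : x ≤ r0 + ε/2 := hx.2
      constructor <;> linarith
    have hr0r1 : r0 < r1 := by simp only [hr1def]; linarith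
    have hanti : StrictAntiOn w (Icc r0 r1) := by
      apply strictAntiOn_of_deriv_neg (convex_Icc _ _) hcw.continuousOn
      intro x hx
      rw [interior_Icc] at hx
      exact hsub ⟨le_of_lt hx.1, le_of_lt hx.2⟩
    have hwr1 : w r1 < 0 := by
      have := hanti ⟨le_refl r0, le_of_lt hr0r1⟩ ⟨le_of_lt hr0r1, le_refl r1⟩ hr0r1
      rw [hwr0] at this; exact this
    exact blowup_contra n κ w hn hκ hdw hdw' hODE r1 (by linarith) hwr1
      (hsub ⟨le_of_lt hr0r1, le_refl r1⟩)
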